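/- arXiv:2507.22718 — 2 statements merged into one kernel-verified Lean document; each statement's English description precedes it below -/
import Mathlib

section
/- Let $n = 1$ and let $P \in \mathbb{C}[X]$ be a non-constant polynomial of degree $d$ with leading coefficient $a_d \neq 0$. Then for all $\delta > 0$, the Lebesgue measure of $\{\theta \in [0,2\pi] : |P(e^{i\theta})| < \delta\}$ is at most $C (\delta/|a_d|)^{1/d}$ for some absolute constant $C$ depending only on $d$. -/
/-!
Factor `P = a_d ∏ (X - z_j)`. If every root were at distance `≥ ε := (δ / |a_d|)^(1/d)` from
`e^{iθ}`, then `|P(e^{iθ})| ≥ |a_d| ε^d = δ`; so a small value forces `e^{iθ}` within `ε` of a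
root. Since the chord `|e^{iθ} - e^{iθ₀}| = 2 |sin ((θ - θ₀)/2)|` dominates `(2/π)` times the
distance of `θ - θ₀` to `2πℤ`, the parameters `θ ∈ [0, 2π]` with `e^{iθ}` in an `ε`-disc form a
set of measure `O(ε)`, and there are at most `d` roots.
-/

open MeasureTheory Complex Real Metric

namespace Polynomial

theorem exists_mem_roots_norm_sub_lt_of_norm_eval_lt {K : Type*} [NormedField K] {P : K[X]}
    (hP : P.Splits) (hdeg : P.natDegree ≠ 0) {w : K} {δ : ℝ} (hw : ‖P.eval w‖ < δ) :
    ∃ z ∈ P.roots, ‖w - z‖ < (δ / ‖P.leadingCoeff‖) ^ ((1 : ℝ) / P.natDegree) := by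
  have hlc : 0 < ‖P.leadingCoeff‖ := by
    simpa using fun h => hdeg (by simp [h])
  have hδ : 0 < δ := (norm_nonneg _).trans_lt hw
  set ε := (δ / ‖P.leadingCoeff‖) ^ ((1 : ℝ) / P.natDegree) with hε
  have hε0 : 0 ≤ ε := Real.rpow_nonneg (div_nonneg hδ.le hlc.le) _
  have hεδ : ‖P.leadingCoeff‖ * ε ^ P.natDegree = δ := by
    rw [hε, one_div, Real.rpow_inv_natCast_pow (by positivity) hdeg, mul_div_cancel₀ _ hlc.ne']
  by_contra! hfar
  have hprod : ε ^ P.natDegree ≤ (P.roots.map (‖w - ·‖)).prod := by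
    simpa [Multiset.map_const', ← hP.natDegree_eq_card_roots] using
      Multiset.prod_map_le_prod_map₀ (fun _ => ε) (‖w - ·‖) (fun _ _ => hε0) hfar
  have heval : ‖P.eval w‖ = ‖P.leadingCoeff‖ * (P.roots.map (‖w - ·‖)).prod := by
    rw [hP.eval_eq_prod_roots, norm_mul, ← normHom_apply (P.roots.map _).prod, map_multiset_prod,
      Multiset.map_map]
    rfl
  have := mul_le_mul_of_nonneg_left hprod hlc.le
  linarith

end Polynomial

theorem Real.two_div_pi_mul_min_le_abs_sin {x : ℝ} (hx : |x| ≤ π) :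
    2 / π * min |x| (π - |x|) ≤ |sin x| := by
  rw [abs_sin_eq_sin_abs_of_abs_le_pi hx]
  rcases le_total |x| (π / 2) with hle | hge
  · exact (mul_le_mul_of_nonneg_left (min_le_left _ _) (by positivity)).trans
      (mul_le_sin (abs_nonneg x) hle)
  · rw [← sin_pi_sub]
    exact (mul_le_mul_of_nonneg_left (min_le_right _ _) (by positivity)).trans
      (mul_le_sin (by linarith) (by linarith))

theorem Real.abs_lt_or_abs_add_two_pi_lt_or_abs_sub_two_pi_lt_of_abs_sin_half_lt {φ ε : ℝ}
    (hφ : |φ| ≤ 2 * π) (h : |sin (φ / 2)| < ε) :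
    |φ| < π * ε ∨ |φ + 2 * π| < π * ε ∨ |φ - 2 * π| < π * ε := by
  have hπ := pi_pos
  have hmin : min (|φ| / 2) (π - |φ| / 2) < π * ε / 2 := by
    have := (two_div_pi_mul_min_le_abs_sin (x := φ / 2)
      (by rw [abs_div, abs_two]; linarith)).trans_lt h
    rw [abs_div, abs_two, div_mul_eq_mul_div, div_lt_iff₀ hπ] at this
    linarith
  rcases min_lt_iff.mp hmin with hnear | hfar
  · left; linarith
  · right
    rcases le_total 0 φ with hφ0 | hφ0
    · rw [abs_of_nonneg hφ0] at hfar hφ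
      right; rw [abs_lt]; constructor <;> linarith
    · rw [abs_of_nonpos hφ0] at hfar hφ
      left; rw [abs_lt]; constructor <;> linarith

theorem Complex.norm_exp_mul_I_sub_exp_mul_I (a b : ℝ) :
    ‖exp (a * I) - exp (b * I)‖ = 2 * |Real.sin ((a - b) / 2)| := by
  have : exp (a * I) - exp (b * I) = exp (b * I) * (exp (I * (a - b : ℝ)) - 1) := by
    rw [mul_sub, ← exp_add, mul_one]; push_cast; ring_nf
  rw [this, norm_mul, norm_exp_ofReal_mul_I, one_mul, norm_exp_I_mul_ofReal_sub_one, norm_mul,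
    Real.norm_two, Real.norm_eq_abs]

theorem volume_setOf_norm_exp_mul_I_sub_lt_le (z : ℂ) (ε : ℝ) :
    volume {θ : ℝ | θ ∈ Set.Icc 0 (2 * π) ∧ ‖exp (θ * I) - z‖ < ε} ≤
      ENNReal.ofReal (6 * π * ε) := by
  set S := {θ : ℝ | θ ∈ Set.Icc 0 (2 * π) ∧ ‖exp (θ * I) - z‖ < ε}
  rcases S.eq_empty_or_nonempty with hS | ⟨θ₀, ⟨hθ₀, hθ₀z⟩⟩
  · simp [hS]
  have hε : 0 < ε := (norm_nonneg _).trans_lt hθ₀z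
  have hsub : S ⊆ ball θ₀ (π * ε) ∪ ball (θ₀ - 2 * π) (π * ε) ∪ ball (θ₀ + 2 * π) (π * ε) := by
    rintro θ ⟨hθ, hθz⟩
    have hchord : 2 * |Real.sin ((θ - θ₀) / 2)| < 2 * ε := by
      rw [← norm_exp_mul_I_sub_exp_mul_I]
      calc _ ≤ ‖exp (θ * I) - z‖ + ‖exp (θ₀ * I) - z‖ := by
            simpa only [dist_eq_norm] using dist_triangle_right (exp (θ * I)) (exp (θ₀ * I)) z
        _ < 2 * ε := by linarith
    have hφ : |θ - θ₀| ≤ 2 * π :=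
      abs_sub_le_iff.mpr ⟨by linarith [hθ.2, hθ₀.1], by linarith [hθ.1, hθ₀.2]⟩
    simp only [Set.mem_union, mem_ball, Real.dist_eq]
    rw [← sub_add, ← sub_sub, or_assoc]
    exact abs_lt_or_abs_add_two_pi_lt_or_abs_sub_two_pi_lt_of_abs_sin_half_lt hφ (by linarith)
  calc volume S
      ≤ volume (ball θ₀ (π * ε)) + volume (ball (θ₀ - 2 * π) (π * ε)) +
          volume (ball (θ₀ + 2 * π) (π * ε)) :=
        (measure_mono hsub).trans <|
          (measure_union_le _ _).trans (add_le_add_left (measure_union_le _ _) _)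
    _ = ENNReal.ofReal (6 * π * ε) := by
      simp only [Real.volume_ball]
      rw [← ENNReal.ofReal_add (by positivity) (by positivity),
        ← ENNReal.ofReal_add (by positivity) (by positivity)]
      ring_nf

theorem volume_setOf_exists_norm_exp_mul_I_sub_lt_le (s : Finset ℂ) (ε : ℝ) :
    volume {θ : ℝ | θ ∈ Set.Icc 0 (2 * π) ∧ ∃ z ∈ s, ‖exp (θ * I) - z‖ < ε} ≤
      s.card * ENNReal.ofReal (6 * π * ε) := by
  calc volume {θ : ℝ | θ ∈ Set.Icc 0 (2 * π) ∧ ∃ z ∈ s, ‖exp (θ * I) - z‖ < ε}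
      ≤ volume (⋃ z ∈ s, {θ : ℝ | θ ∈ Set.Icc 0 (2 * π) ∧ ‖exp (θ * I) - z‖ < ε}) :=
        measure_mono fun θ ⟨hθ, z, hz, hθz⟩ => Set.mem_biUnion hz ⟨hθ, hθz⟩
    _ ≤ ∑ z ∈ s, volume {θ : ℝ | θ ∈ Set.Icc 0 (2 * π) ∧ ‖exp (θ * I) - z‖ < ε} :=
        measure_biUnion_finset_le _ _
    _ ≤ ∑ _z ∈ s, ENNReal.ofReal (6 * π * ε) :=
        Finset.sum_le_sum fun z _ => volume_setOf_norm_exp_mul_I_sub_lt_le z ε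
    _ = s.card * ENNReal.ofReal (6 * π * ε) := by rw [Finset.sum_const, nsmul_eq_mul]

theorem stmt_1 (d : ℕ) (hd : 1 ≤ d) :
    ∃ C > 0, ∀ P : Polynomial ℂ, P.natDegree = d →
      ∀ δ : ℝ, 0 < δ →
        volume {θ : ℝ | θ ∈ Set.Icc (0:ℝ) (2 * Real.pi) ∧
          ‖P.eval (Complex.exp (θ * Complex.I))‖ < δ}
        ≤ ENNReal.ofReal (C * (δ / ‖P.leadingCoeff‖) ^ ((1:ℝ) / d)) := by
  refine ⟨6 * π * d, by positivity, fun P hPd δ hδ => ?_⟩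
  set ε := (δ / ‖P.leadingCoeff‖) ^ ((1 : ℝ) / d)
  have hnear : ∀ θ : ℝ, ‖P.eval (exp (θ * I))‖ < δ →
      ∃ z ∈ P.roots.toFinset, ‖exp (θ * I) - z‖ < ε := fun θ hθ => by
    obtain ⟨z, hz, hθz⟩ := Polynomial.exists_mem_roots_norm_sub_lt_of_norm_eval_lt
      (IsAlgClosed.splits P) (by omega) hθ
    rw [hPd] at hθz
    exact ⟨z, Multiset.mem_toFinset.mpr hz, hθz⟩
  have hcard : (P.roots.toFinset.card : ENNReal) ≤ d := by
    exact_mod_cast (Multiset.toFinset_card_le _).trans (hPd ▸ P.card_roots')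
  calc volume _
      ≤ volume {θ : ℝ | θ ∈ Set.Icc 0 (2 * π) ∧
          ∃ z ∈ P.roots.toFinset, ‖exp (θ * I) - z‖ < ε} :=
        measure_mono fun θ hθ => ⟨hθ.1, hnear θ hθ.2⟩
    _ ≤ P.roots.toFinset.card * ENNReal.ofReal (6 * π * ε) :=
        volume_setOf_exists_norm_exp_mul_I_sub_lt_le _ ε
    _ ≤ d * ENNReal.ofReal (6 * π * ε) := by gcongr
    _ = ENNReal.ofReal (6 * π * d * ε) := by
        rw [← ENNReal.ofReal_natCast d, ← ENNReal.ofReal_mul (Nat.cast_nonneg d)]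
        ring_nf
end

section
/- Let $a : \mathbb{N} \to \mathbb{R}$ be a sequence such that $a(m) < 0$ for some $m$, and such that the set $\{m \leq x : a(m) \neq 0\}$ has cardinality $\geq c x$ for all sufficiently large $x$ (some $c > 0$). Suppose moreover that $a$ is multiplicative. Then there exist infinitely many $m$ with $a(m) a(m') < 0$ for consecutive nonzero terms, i.e. the sequence of nonzero values of $a$ changes sign infinitely often. -/
/-!
A negative value of the multiplicative function `a` forces a negative value `a q < 0` at a prime
power `q = p ^ k`. If `x` is coprime to `p` and `a x ≠ 0`, then `a x` and `a (q * x) = a q * a x`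
have opposite signs, so the nonzero terms change sign somewhere in `[x, q * x]`. Such `x` exist
beyond every bound: otherwise the `p`-free part of every `s` with `a s ≠ 0` is at most some `M`,
so `s ≤ p ^ j * M` unless `p ^ j ∣ s`, and at most `p ^ j * M + N / p ^ j` terms up to `N` are
nonzero, contradicting positive density once `c * p ^ j > 2`.
-/

open Finset

theorem mul_neg_or_mul_neg_of_mul_neg {R : Type*} [CommRing R] [LinearOrder R]
    [IsStrictOrderedRing R] {x y z : R} (hxz : x * z < 0) (hy : y ≠ 0) :
    x * y < 0 ∨ y * z < 0 := by
  by_contra! h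
  have : 0 ≤ (x * y) * (y * z) := mul_nonneg h.1 h.2
  have : (x * y) * (y * z) = (x * z) * (y * y) := by ring
  nlinarith [mul_self_pos.mpr hy]

theorem exists_consecutive_sign_change {R : Type*} [CommRing R] [LinearOrder R]
    [IsStrictOrderedRing R] (a : ℕ → R) {p q : ℕ} (hpq : p < q) (h : a p * a q < 0) :
    ∃ m m', p ≤ m ∧ m < m' ∧ m' ≤ q ∧ a m * a m' < 0 ∧ ∀ k, m < k → k < m' → a k = 0 := by
  induction hd : q - p using Nat.strong_induction_on generalizing p q with
  | _ d ih =>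
    by_cases hgap : ∀ k, p < k → k < q → a k = 0
    · exact ⟨p, q, le_rfl, hpq, le_rfl, h, hgap⟩
    push Not at hgap
    obtain ⟨k, hpk, hkq, hk⟩ := hgap
    rcases mul_neg_or_mul_neg_of_mul_neg h hk with hleft | hright
    · obtain ⟨m, m', hm, hmm', hm', hsign, hzero⟩ := ih (k - p) (by omega) hpk hleft rfl
      exact ⟨m, m', hm, hmm', hm'.trans hkq.le, hsign, hzero⟩
    · obtain ⟨m, m', hm, hmm', hm', hsign, hzero⟩ := ih (q - k) (by omega) hkq hright rfl
      exact ⟨m, m', hpk.le.trans hm, hmm', hm', hsign, hzero⟩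

section Multiplicative

variable {a : ℕ → ℝ} (hmul : ∀ m n : ℕ, Nat.Coprime m n → a (m * n) = a m * a n)
include hmul

theorem exists_isPrimePow_neg {m : ℕ} (hm : 0 < m) (ham : a m < 0) :
    ∃ q, IsPrimePow q ∧ a q < 0 := by
  induction m using Nat.recOnPosPrimePosCoprime with
  | prime_pow p k hp hk => exact ⟨p ^ k, (isPrimePow_nat_iff _).2 ⟨p, k, hp, hk, rfl⟩, ham⟩
  | zero => omega
  | one =>
    have h1 : a 1 = a 1 * a 1 := by simpa using hmul 1 1 (Nat.coprime_one_left 1)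
    nlinarith
  | coprime b c hb hc hbc ihb ihc =>
    rw [hmul b c hbc] at ham
    rcases lt_or_ge (a b) 0 with hb' | hb'
    · exact ihb (by omega) hb'
    · exact ihc (by omega) (by nlinarith)

theorem le_pow_mul_of_not_pow_dvd {p k M s : ℕ} (hp : p.Prime)
    (hM : ∀ x, Nat.Coprime p x → a x ≠ 0 → x ≤ M)
    (hs : s ≠ 0) (has : a s ≠ 0) (hdvd : ¬ p ^ k ∣ s) : s ≤ p ^ k * M := by
  have hcop : Nat.Coprime (ordProj[p] s) (ordCompl[p] s) :=
    (Nat.coprime_ordCompl hp hs).pow_left _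
  have hsplit := Nat.ordProj_mul_ordCompl_eq_self s p
  have hcompl : ordCompl[p] s ≤ M := by
    refine hM _ (Nat.coprime_ordCompl hp hs) fun h => has ?_
    rw [← hsplit, hmul _ _ hcop, h, mul_zero]
  have hproj : ordProj[p] s ≤ p ^ k := by
    rw [hp.pow_dvd_iff_le_factorization hs, not_le] at hdvd
    exact Nat.pow_le_pow_right hp.pos hdvd.le
  rw [← hsplit]
  exact Nat.mul_le_mul hproj hcompl

theorem card_filter_ne_zero_le {p k M : ℕ} (hp : p.Prime)
    (hM : ∀ x, Nat.Coprime p x → a x ≠ 0 → x ≤ M) (N : ℕ) :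
    #{s ∈ Icc 1 N | a s ≠ 0} ≤ p ^ k * M + N / p ^ k := by
  have hsub : {s ∈ Icc 1 N | a s ≠ 0} ⊆ Icc 1 (p ^ k * M) ∪ {s ∈ Ioc 0 N | p ^ k ∣ s} := by
    intro s hs
    simp only [mem_filter, mem_Icc] at hs
    by_cases hdvd : p ^ k ∣ s
    · exact mem_union_right _ (mem_filter.2 ⟨mem_Ioc.2 ⟨hs.1.1, hs.1.2⟩, hdvd⟩)
    · exact mem_union_left _ (mem_Icc.2
        ⟨hs.1.1, le_pow_mul_of_not_pow_dvd hmul hp hM (by omega) hs.2 hdvd⟩)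
  calc #{s ∈ Icc 1 N | a s ≠ 0}
      ≤ #(Icc 1 (p ^ k * M)) + #{s ∈ Ioc 0 N | p ^ k ∣ s} :=
        (card_le_card hsub).trans (card_union_le _ _)
    _ = p ^ k * M + N / p ^ k := by rw [Nat.card_Icc, Nat.Ioc_filter_dvd_card_eq_div]; rfl

theorem exists_gt_coprime_ne_zero {p : ℕ} (hp : p.Prime) {c : ℝ} (hc : 0 < c) {N₀ : ℕ}
    (hdens : ∀ N, N₀ ≤ N → c * N ≤ #{m ∈ Icc 1 N | a m ≠ 0}) (M : ℕ) :
    ∃ x, M < x ∧ Nat.Coprime p x ∧ a x ≠ 0 := by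
  by_contra! hM
  replace hM : ∀ x, Nat.Coprime p x → a x ≠ 0 → x ≤ M := fun x hx hax =>
    not_lt.1 fun hlt => hax (hM x hlt hx)
  obtain ⟨k, hpk⟩ := pow_unbounded_of_one_lt (2 / c) (by exact_mod_cast hp.one_lt : (1 : ℝ) < p)
  obtain ⟨n, hn⟩ := exists_nat_gt (2 * (p : ℝ) ^ k * M / c)
  set N := max N₀ (n + 1)
  have hq : (0 : ℝ) < (p : ℝ) ^ k := pow_pos (by exact_mod_cast hp.pos) k
  have hNpos : (0 : ℝ) < N := by exact_mod_cast Nat.succ_pos n |>.trans_le (le_max_right _ _)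
  have hcN : 2 * (p : ℝ) ^ k * M < c * N := by
    rw [div_lt_iff₀ hc] at hn
    have : (n : ℝ) ≤ N := by exact_mod_cast (Nat.le_succ n).trans (le_max_right _ _)
    nlinarith
  have hcq : 2 < c * (p : ℝ) ^ k := by rwa [div_lt_iff₀ hc, mul_comm] at hpk
  have hupper : c * N ≤ (p : ℝ) ^ k * M + N / (p : ℝ) ^ k := by
    calc c * N ≤ #{m ∈ Icc 1 N | a m ≠ 0} := hdens N (le_max_left _ _)
      _ ≤ ((p ^ k * M + N / p ^ k : ℕ) : ℝ) := by
        exact_mod_cast card_filter_ne_zero_le hmul hp hM N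
      _ ≤ (p : ℝ) ^ k * M + N / (p : ℝ) ^ k := by
        have hdiv : ((N / p ^ k : ℕ) : ℝ) ≤ N / (p : ℝ) ^ k := by
          simpa using Nat.cast_div_le (α := ℝ) (m := N) (n := p ^ k)
        push_cast
        linarith
  have hsmall : (N : ℝ) / (p : ℝ) ^ k < c * N / 2 := by
    rw [div_lt_div_iff₀ hq two_pos]
    nlinarith
  linarith

end Multiplicative

theorem stmt_14_general (a : ℕ → ℝ)
    (hmul : ∀ m n : ℕ, Nat.Coprime m n → a (m * n) = a m * a n)
    (hneg : ∃ m : ℕ, 1 ≤ m ∧ a m < 0)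
    (hdens : ∃ c > (0:ℝ), ∃ N₀ : ℕ, ∀ N : ℕ, N₀ ≤ N →
      c * N ≤ ((Finset.Icc 1 N).filter (fun m => a m ≠ 0)).card) :
    ∀ N : ℕ, ∃ m m' : ℕ, N < m ∧ m < m' ∧ a m * a m' < 0 ∧
      ∀ k : ℕ, m < k → k < m' → a k = 0 := by
  intro N
  obtain ⟨m₀, hm₀, ham₀⟩ := hneg
  obtain ⟨q, hq, haq⟩ := exists_isPrimePow_neg hmul hm₀ ham₀
  obtain ⟨p, k, hp, hk, rfl⟩ := (isPrimePow_nat_iff q).1 hq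
  obtain ⟨c, hc, N₀, hN₀⟩ := hdens
  obtain ⟨x, hNx, hpx, hax⟩ := exists_gt_coprime_ne_zero hmul hp hc hN₀ N
  have hsign : a x * a (p ^ k * x) < 0 := by
    rw [hmul _ _ (hpx.pow_left k)]
    nlinarith [mul_self_pos.mpr hax]
  have hlt : x < p ^ k * x :=
    lt_mul_left (by omega) (Nat.one_lt_pow hk.ne' hp.one_lt)
  obtain ⟨m, m', hm, hmm', -, hsign', hzero⟩ := exists_consecutive_sign_change a hlt hsign
  exact ⟨m, m', by omega, hmm', hsign', hzero⟩

theorem stmt_14 (a : ℕ → ℝ) (ha1 : a 1 = 1)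
    (hmul : ∀ m n : ℕ, Nat.Coprime m n → a (m * n) = a m * a n)
    (hneg : ∃ m : ℕ, 1 ≤ m ∧ a m < 0)
    (hdens : ∃ c > (0:ℝ), ∃ N₀ : ℕ, ∀ N : ℕ, N₀ ≤ N →
      c * N ≤ ((Finset.Icc 1 N).filter (fun m => a m ≠ 0)).card) :
    ∀ N : ℕ, ∃ m m' : ℕ, N < m ∧ m < m' ∧ a m * a m' < 0 ∧
      ∀ k : ℕ, m < k → k < m' → a k = 0 :=
  stmt_14_general a hmul hneg hdens
end
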